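/- Let Σⁿ be a compact n-dimensional submanifold of ℝ^{n+m} with smooth boundary, let u be a C² function on Σ, and define Φ : T^⊥(Σ∖∂Σ) → ℝ^{n+m} by Φ(x,y) = ∇^Σ u(x) + y for x ∈ Σ∖∂Σ and y ∈ T_x^⊥Σ. Then the Jacobian determinant of Φ is given by det DΦ(x,y) = det(D²_Σ u(x) − ⟨II(x), y⟩) for all (x,y) in the total space of the normal bundle of Σ∖∂Σ. -/

import Mathlib

open MeasureTheory Metric
open scoped InnerProductSpace

noncomputable section

/-- Euclidean space `ℝ^N`. -/
abbrev Euc (N : ℕ) := EuclideanSpace ℝ (Fin N)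

/-- The Lebesgue volume `|B^k|` of the unit ball in `ℝ^k`. -/
def unitBallVol (k : ℕ) : ℝ := (volume (ball (0 : Euc k) 1)).toReal

/-- The tangent space of a set `S ⊆ ℝ^N` at a point `x`, namely the linear span of
the tangent cone of `S` at `x`.  For a smooth embedded submanifold (possibly with
boundary) this is the usual tangent space. -/
def tangentSpace {N : ℕ} (S : Set (Euc N)) (x : Euc N) : Submodule ℝ (Euc N) :=
  Submodule.span ℝ (tangentConeAt ℝ S x)

/-- The orthogonal projection of the ambient space onto the tangent space of `S` at
`x`, viewed as an endomorphism of the ambient space. -/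
def tproj {N : ℕ} (S : Set (Euc N)) (x : Euc N) : Euc N →L[ℝ] Euc N :=
  (tangentSpace S x).subtypeL.comp (tangentSpace S x).orthogonalProjectionOnto

/-- `S` is a compact smooth embedded `n`-dimensional submanifold of `ℝ^N` with
(possibly empty) smooth boundary `B`: `S` is compact, `B ⊆ S`, and near every point
`S` is parametrized by a smooth injective immersion of a relatively open piece of a
half space of `ℝⁿ`, with `B` corresponding to the bounding hyperplane. -/
def IsCompactSmoothSubmanifoldWithBoundary (n N : ℕ) (S B : Set (Euc N)) : Prop :=
  IsCompact S ∧ B ⊆ S ∧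
  ∀ x ∈ S, ∃ (U : Set (Euc N)) (W : Set (Euc n)) (f : Euc n → Euc N)
      (ℓ : Euc n →ₗ[ℝ] ℝ),
    IsOpen U ∧ x ∈ U ∧ IsOpen W ∧ ℓ ≠ 0 ∧ ContDiff ℝ (⊤ : ℕ∞) f ∧
    Set.InjOn f W ∧ (∀ y ∈ W, LinearMap.ker (fderiv ℝ f y : Euc n →ₗ[ℝ] Euc N) = ⊥) ∧
    f '' (W ∩ {y | 0 ≤ ℓ y}) = S ∩ U ∧
    f '' (W ∩ {y | ℓ y = 0}) = B ∩ U

/-! In the adapted frame `(v, ν(x))` the normal columns of `DΦ` are the frame vectors themselves,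
which are orthogonal to the tangential rows, so the determinant is that of the tangential block.
Its entries are `⟨v_k, D(∇u) v_l⟩ + Σ_a y_a ⟨v_k, Dν_a v_l⟩ = D²u(v_l, v_k) - ⟨II(v_l, v_k), y⟩`,
by the Weingarten relation defining `II` and the expansion `y = Σ_a y_a ν_a(x)`; the latter holds
because a chart makes the tangent space at least `n`-dimensional, so the `m` frame vectors span the
normal space. That `∇^Σ u` is differentiable at all comes from writing it near `x` as the tangential
part `G - Σ_a ⟨G, ν_a⟩ ν_a` of the Riesz representative `G` of a `C¹` field of derivatives of `u`
within `Σ`. -/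

open Module Set Filter Topology

theorem span_halfSpace_eq_top {E : Type*} [AddCommGroup E] [Module ℝ E] (ℓ : E →ₗ[ℝ] ℝ) :
    Submodule.span ℝ {e | 0 ≤ ℓ e} = ⊤ := by
  refine eq_top_iff.2 fun e _ => ?_
  rcases le_total 0 (ℓ e) with h | h
  · exact Submodule.subset_span h
  · have hneg : -e ∈ {e | 0 ≤ ℓ e} := by simpa using h
    simpa using Submodule.neg_mem _ (Submodule.subset_span hneg)

theorem span_tangentConeAt_inter_halfSpace_eq_top {E : Type*} [NormedAddCommGroup E]
    [NormedSpace ℝ E] (ℓ : E →ₗ[ℝ] ℝ) {W : Set E} {w : E} (hW : W ∈ 𝓝 w) (hw : 0 ≤ ℓ w) :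
    Submodule.span ℝ (tangentConeAt ℝ (W ∩ {y | 0 ≤ ℓ y}) w) = ⊤ := by
  refine eq_top_iff.2 ((span_halfSpace_eq_top ℓ).ge.trans (Submodule.span_mono fun e he => ?_))
  rw [inter_comm, tangentConeAt_inter_nhds hW]
  have hwe : w + e ∈ {y | 0 ≤ ℓ y} := by
    simp only [mem_ofPred_eq, map_add] at he ⊢
    linarith
  simpa using mem_tangentConeAt_of_segment_subset
    ((convex_halfSpace_ge ℓ.isLinear 0).segment_subset hw hwe)

section TangentSpace

variable {N : ℕ} {S : Set (Euc N)}

theorem HasFDerivWithinAt.fderivWithin_eqOn_tangentSpace {F : Type*} [NormedAddCommGroup F]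
    [NormedSpace ℝ F] {f : Euc N → F} {z : Euc N} {D : Euc N →L[ℝ] F}
    (h : HasFDerivWithinAt f D S z) : EqOn (fderivWithin ℝ f S z) D (tangentSpace S z) :=
  LinearMap.eqOn_span (h.differentiableWithinAt.hasFDerivWithinAt.unique_on h)

theorem IsCompactSmoothSubmanifoldWithBoundary.le_finrank_tangentSpace {n : ℕ} {B : Set (Euc N)}
    (hS : IsCompactSmoothSubmanifoldWithBoundary n N S B) {z : Euc N} (hz : z ∈ S) :
    n ≤ finrank ℝ (tangentSpace S z) := by
  obtain ⟨U, W, f, ℓ, -, hzU, hW, -, hf, -, hker, himg, -⟩ := hS.2.2 z hz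
  obtain ⟨w, hw, rfl⟩ : z ∈ f '' (W ∩ {y | 0 ≤ ℓ y}) := himg ▸ ⟨hz, hzU⟩
  set Df : Euc n →L[ℝ] Euc N := fderiv ℝ f w
  have hDf : HasFDerivWithinAt f Df (W ∩ {y | 0 ≤ ℓ y}) w :=
    ((hf.differentiable (by simp)) w).hasFDerivAt.hasFDerivWithinAt
  have hrange : LinearMap.range (Df : Euc n →ₗ[ℝ] Euc N) ≤ tangentSpace S (f w) := by
    rw [LinearMap.range_eq_map, ← span_tangentConeAt_inter_halfSpace_eq_top ℓ (hW.mem_nhds hw.1)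
      hw.2, Submodule.map_span_le]
    exact fun e he => Submodule.subset_span
      (tangentConeAt_mono (himg.trans_subset inter_subset_left) (hDf.mapsTo_tangent_cone he))
  calc n = finrank ℝ (LinearMap.range (Df : Euc n →ₗ[ℝ] Euc N)) := by
        rw [LinearMap.finrank_range_of_inj (LinearMap.ker_eq_bot.mp (hker w hw.1)),
          finrank_euclideanSpace_fin]
    _ ≤ finrank ℝ (tangentSpace S (f w)) := Submodule.finrank_mono hrange

end TangentSpace

section Orthonormal

variable {E : Type*} [NormedAddCommGroup E] [InnerProductSpace ℝ E] {ι : Type*} [Fintype ι]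
  {w : ι → E}

theorem Orthonormal.eq_sum_inner_smul_of_mem_span (hw : Orthonormal ℝ w) {q : E}
    (hq : q ∈ Submodule.span ℝ (range w)) : q = ∑ i, ⟪q, w i⟫_ℝ • w i := by
  obtain ⟨c, rfl⟩ := (Submodule.mem_span_range_iff_exists_fun ℝ).mp hq
  simp_rw [hw.inner_left_fintype]
  rfl

theorem Orthonormal.span_range_eq_of_finrank_le [FiniteDimensional ℝ E] (hw : Orthonormal ℝ w)
    {K : Submodule ℝ E} (hwK : ∀ i, w i ∈ K) (hK : finrank ℝ K ≤ Fintype.card ι) :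
    Submodule.span ℝ (range w) = K := by
  refine Submodule.eq_of_le_of_finrank_le (Submodule.span_le.mpr (range_subset_iff.mpr hwK)) ?_
  rwa [finrank_span_eq_card hw.linearIndependent]

theorem Orthonormal.eq_sub_sum_inner_smul_of_inner_eq (hw : Orthonormal ℝ w) {K : Submodule ℝ E}
    (hspan : Submodule.span ℝ (range w) = Kᗮ) {a g : E} (ha : a ∈ K)
    (hag : ∀ t ∈ K, ⟪a, t⟫_ℝ = ⟪g, t⟫_ℝ) : a = g - ∑ i, ⟪g, w i⟫_ℝ • w i := by
  have hperp : g - a ∈ Kᗮ := (K.mem_orthogonal' _).2 fun t ht => by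
    rw [inner_sub_left, hag t ht, sub_self]
  have hwK : ∀ i, ⟪a, w i⟫_ℝ = 0 := fun i =>
    K.inner_right_of_mem_orthogonal ha (hspan ▸ Submodule.subset_span (mem_range_self i))
  rw [← hspan] at hperp
  have hexp := hw.eq_sum_inner_smul_of_mem_span hperp
  simp only [inner_sub_left, hwK, sub_zero] at hexp
  rw [← hexp, sub_sub_cancel]

end Orthonormal

theorem Matrix.det_of_inner_sumElim_of_orthonormal {E : Type*} [NormedAddCommGroup E]
    [InnerProductSpace ℝ E] {ι κ : Type*} [Fintype ι] [DecidableEq ι] [Fintype κ] [DecidableEq κ]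
    (v T : ι → E) {e : κ → E} (he : Orthonormal ℝ e) (hve : ∀ i a, ⟪v i, e a⟫_ℝ = 0) :
    (Matrix.of fun r c : ι ⊕ κ => ⟪Sum.elim v e r, Sum.elim T e c⟫_ℝ).det
      = (Matrix.of fun i j => ⟪v i, T j⟫_ℝ).det := by
  have hblocks : (Matrix.of fun r c : ι ⊕ κ => ⟪Sum.elim v e r, Sum.elim T e c⟫_ℝ)
      = Matrix.fromBlocks (Matrix.of fun i j => ⟪v i, T j⟫_ℝ) 0
          (Matrix.of fun a j => ⟪e a, T j⟫_ℝ) 1 := by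
    ext (i | a) (j | b) <;> simp [hve, orthonormal_iff_ite.mp he, Matrix.one_apply]
  rw [hblocks, Matrix.det_fromBlocks_zero₁₂, Matrix.det_one, mul_one]

section Normal

open InnerProductSpace

variable {n m : ℕ} {S B : Set (Euc (n + m))}

theorem IsCompactSmoothSubmanifoldWithBoundary.span_normalFrame_eq
    (hS : IsCompactSmoothSubmanifoldWithBoundary n (n + m) S B) {z : Euc (n + m)} (hz : z ∈ S)
    {ν : Fin m → Euc (n + m)} (hν : Orthonormal ℝ ν) (hνT : ∀ a, ν a ∈ (tangentSpace S z)ᗮ) :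
    Submodule.span ℝ (range ν) = (tangentSpace S z)ᗮ := by
  refine hν.span_range_eq_of_finrank_le hνT ?_
  have hsum := (tangentSpace S z).finrank_add_finrank_orthogonal
  have hn := hS.le_finrank_tangentSpace hz
  rw [finrank_euclideanSpace_fin] at hsum
  rw [Fintype.card_fin]
  omega

variable {u : Euc (n + m) → ℝ} {gradu : Euc (n + m) → Euc (n + m)}
  {ν : Fin m → Euc (n + m) → Euc (n + m)}

theorem IsCompactSmoothSubmanifoldWithBoundary.gradient_eq_sub_sum_inner_normalFrame
    (hS : IsCompactSmoothSubmanifoldWithBoundary n (n + m) S B)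
    (hgradu : ∀ x ∈ S, gradu x ∈ tangentSpace S x ∧
      ∀ v ∈ tangentSpace S x, ⟪gradu x, v⟫_ℝ = fderivWithin ℝ u S x v)
    (hν : ∀ p ∈ S, Orthonormal ℝ (fun a => ν a p) ∧ ∀ a, ν a p ∈ (tangentSpace S p)ᗮ)
    {z : Euc (n + m)} (hz : z ∈ S) {L : Euc (n + m) →L[ℝ] ℝ} (hL : HasFDerivWithinAt u L S z) :
    gradu z = (toDual ℝ _).symm L
      - ∑ a, ⟪(toDual ℝ _).symm L, ν a z⟫_ℝ • ν a z :=
  (hν z hz).1.eq_sub_sum_inner_smul_of_inner_eq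
    (hS.span_normalFrame_eq hz (hν z hz).1 (hν z hz).2) (hgradu z hz).1 fun t ht => by
      rw [(hgradu z hz).2 t ht, hL.fderivWithin_eqOn_tangentSpace ht,
        toDual_symm_apply]

theorem IsCompactSmoothSubmanifoldWithBoundary.differentiableWithinAt_gradient
    (hS : IsCompactSmoothSubmanifoldWithBoundary n (n + m) S B) (hu : ContDiffOn ℝ 2 u S)
    (hgradu : ∀ x ∈ S, gradu x ∈ tangentSpace S x ∧
      ∀ v ∈ tangentSpace S x, ⟪gradu x, v⟫_ℝ = fderivWithin ℝ u S x v)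
    (hνd : ∀ a, Differentiable ℝ (ν a))
    (hν : ∀ p ∈ S, Orthonormal ℝ (fun a => ν a p) ∧ ∀ a, ν a p ∈ (tangentSpace S p)ᗮ)
    {x : Euc (n + m)} (hx : x ∈ S) : DifferentiableWithinAt ℝ gradu S x := by
  obtain ⟨s, hs, -, L, hL, hLd⟩ :=
    (contDiffWithinAt_succ_iff_hasFDerivWithinAt (n := 1) (by simp)).mp (hu x hx)
  rw [insert_eq_of_mem hx] at hs
  set G : Euc (n + m) → Euc (n + m) := fun z => (toDual ℝ _).symm (L z)
  have hG : DifferentiableWithinAt ℝ G S x :=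
    ((toDual ℝ _).symm.toContinuousLinearEquiv.differentiableAt.comp_differentiableWithinAt x
      (hLd.differentiableWithinAt one_ne_zero)).mono_of_mem_nhdsWithin hs
  have hgrad : gradu =ᶠ[𝓝[S] x] fun z => G z - ∑ a, ⟪G z, ν a z⟫_ℝ • ν a z := by
    filter_upwards [self_mem_nhdsWithin, hs, eventually_eventually_nhdsWithin.2 hs]
      with z hzS hzs hsz
    exact hS.gradient_eq_sub_sum_inner_normalFrame hgradu hν hzS
      ((hL z hzs).mono_of_mem_nhdsWithin hsz)
  refine DifferentiableWithinAt.congr_of_eventuallyEq_of_mem ?_ hgrad hx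
  have hνx : ∀ a, DifferentiableWithinAt ℝ (ν a) S x := fun a => (hνd a x).differentiableWithinAt
  exact hG.sub (.fun_sum fun a _ => (hG.inner ℝ (hνx a)).smul (hνx a))

end Normal

theorem inner_fderivWithin_gradient_add_normalFrame {N m : ℕ} {S : Set (Euc N)}
    {II : Euc N → Euc N →ₗ[ℝ] Euc N →ₗ[ℝ] Euc N}
    (hII_def : ∀ Z : Euc N → Euc N, ContDiff ℝ (⊤ : ℕ∞) Z →
      (∀ p ∈ S, Z p ∈ (tangentSpace S p)ᗮ) →
      ∀ x ∈ S, ∀ v ∈ tangentSpace S x, ∀ w ∈ tangentSpace S x,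
        ⟪II x v w, Z x⟫_ℝ = -⟪(fderiv ℝ Z x) v, w⟫_ℝ)
    {gradu : Euc N → Euc N} {Hess : Euc N → Euc N →ₗ[ℝ] Euc N →ₗ[ℝ] ℝ}
    (hHess_def : ∀ x ∈ S, ∀ v ∈ tangentSpace S x, ∀ w ∈ tangentSpace S x,
      Hess x v w = ⟪fderivWithin ℝ gradu S x v, w⟫_ℝ)
    {ν : Fin m → Euc N → Euc N} (hν : ∀ a, ContDiff ℝ (⊤ : ℕ∞) (ν a))
    (hνT : ∀ p ∈ S, ∀ a, ν a p ∈ (tangentSpace S p)ᗮ)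
    {x : Euc N} (hx : x ∈ S) (hgradu : DifferentiableWithinAt ℝ gradu S x) (c : Fin m → ℝ)
    {v w : Euc N} (hv : v ∈ tangentSpace S x) (hw : w ∈ tangentSpace S x) :
    ⟪w, fderivWithin ℝ (fun p => gradu p + ∑ a, c a • ν a p) S x v⟫_ℝ
      = Hess x v w - ⟪II x v w, ∑ a, c a • ν a x⟫_ℝ := by
  have hD : HasFDerivWithinAt (fun p => gradu p + ∑ a, c a • ν a p)
      (fderivWithin ℝ gradu S x + ∑ a, c a • fderiv ℝ (ν a) x) S x :=
    hgradu.hasFDerivWithinAt.add (HasFDerivAt.fun_sum fun a _ =>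
      (((hν a).differentiable (by simp)) x).hasFDerivAt.const_smul (c a)).hasFDerivWithinAt
  have hweingarten : ∀ a, ⟪w, fderiv ℝ (ν a) x v⟫_ℝ = -⟪II x v w, ν a x⟫_ℝ := fun a => by
    rw [hII_def (ν a) (hν a) (fun p hp => hνT p hp a) x hx v hv w hw, neg_neg, real_inner_comm]
  rw [hD.fderivWithin_eqOn_tangentSpace hv, hHess_def x hx v hv w hw, real_inner_comm w]
  simp [inner_add_right, inner_sum, inner_smul_right, hweingarten, sub_eq_add_neg]

theorem jacobian_det_phi_general
    (n m : ℕ)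
    (S bS : Set (Euc (n + m)))
    (hS : IsCompactSmoothSubmanifoldWithBoundary n (n + m) S bS)
    -- the second fundamental form `II` of `Σ`, normal-bundle valued, characterized by
    -- `⟪II(v,w), Z⟫ = -⟪D̄_v Z, w⟫` for every smooth ambient normal field `Z`
    (II : Euc (n + m) → Euc (n + m) →ₗ[ℝ] Euc (n + m) →ₗ[ℝ] Euc (n + m))
    (hII_def : ∀ Z : Euc (n + m) → Euc (n + m), ContDiff ℝ (⊤ : ℕ∞) Z →
      (∀ p ∈ S, Z p ∈ (tangentSpace S p)ᗮ) →
      ∀ x ∈ S, ∀ v ∈ tangentSpace S x, ∀ w ∈ tangentSpace S x,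
        ⟪II x v w, Z x⟫_ℝ = -⟪(fderiv ℝ Z x) v, w⟫_ℝ)
    -- a `C²` function `u` on `Σ` and its tangential gradient `∇^Σ u`
    (u : Euc (n + m) → ℝ) (hu : ContDiffOn ℝ 2 u S)
    (gradu : Euc (n + m) → Euc (n + m))
    (hgradu : ∀ x ∈ S, gradu x ∈ tangentSpace S x ∧
      ∀ v ∈ tangentSpace S x, ⟪gradu x, v⟫_ℝ = fderivWithin ℝ u S x v)
    -- the Hessian `D²_Σ u` of `u` on `Σ`, as a bilinear form on each tangent space
    (Hess : Euc (n + m) → Euc (n + m) →ₗ[ℝ] Euc (n + m) →ₗ[ℝ] ℝ)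
    (hHess_def : ∀ x ∈ S, ∀ v ∈ tangentSpace S x, ∀ w ∈ tangentSpace S x,
      Hess x v w = ⟪fderivWithin ℝ gradu S x v, w⟫_ℝ) :
    ∀ x ∈ S \ bS, ∀ y ∈ (tangentSpace S x)ᗮ,
    ∀ v : Fin n → Euc (n + m), Orthonormal ℝ v → (∀ k, v k ∈ tangentSpace S x) →
    ∀ Nf : Fin m → Euc (n + m) → Euc (n + m),
      (∀ a, ContDiff ℝ (⊤ : ℕ∞) (Nf a)) →
      (∀ p ∈ S, Orthonormal ℝ (fun a => Nf a p) ∧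
        ∀ a, Nf a p ∈ (tangentSpace S p)ᗮ) →
      -- the matrix of `DΦ(x,y)` in the adapted orthonormal frame
      Matrix.det (Matrix.of fun r c : Fin n ⊕ Fin m =>
        ⟪Sum.elim v (fun a => Nf a x) r,
          Sum.elim
            (fun j => fderivWithin ℝ
              (fun p => gradu p + ∑ a, ⟪y, Nf a x⟫_ℝ • Nf a p) S x (v j))
            (fun a => Nf a x) c⟫_ℝ)
        = Matrix.det (Matrix.of fun k l =>
            Hess x (v k) (v l) - ⟪II x (v k) (v l), y⟫_ℝ) := by
  intro x ⟨hx, _⟩ y hy v _ hvT Nf hNf hNfS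
  obtain ⟨hNfx, hNfxT⟩ := hNfS x hx
  have hy_eq : y = ∑ a, ⟪y, Nf a x⟫_ℝ • Nf a x :=
    hNfx.eq_sum_inner_smul_of_mem_span (hS.span_normalFrame_eq hx hNfx hNfxT ▸ hy)
  have hgradu_diff : DifferentiableWithinAt ℝ gradu S x := hS.differentiableWithinAt_gradient hu
    hgradu (fun a => (hNf a).differentiable (by simp)) hNfS hx
  rw [Matrix.det_of_inner_sumElim_of_orthonormal _ _ hNfx
    fun k a => (tangentSpace S x).inner_right_of_mem_orthogonal (hvT k) (hNfxT a),
    ← Matrix.det_transpose]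
  congr 1
  ext k l
  rw [Matrix.transpose_apply, Matrix.of_apply, Matrix.of_apply,
    inner_fderivWithin_gradient_add_normalFrame hII_def hHess_def hNf (fun p hp => (hNfS p hp).2)
      hx hgradu_diff _ (hvT k) (hvT l), ← hy_eq]

/-- **Lemma 3.2 (Brendle, Lemma 5).**  For a `C²` function `u` on a compact
submanifold `Σⁿ ⊆ ℝ^{n+m}` with boundary, the Jacobian determinant of the normal
exponential-type map `Φ(x,y) = ∇^Σ u(x) + y` on the normal bundle of `Σ∖∂Σ`,
computed (with respect to the natural volume of the normal bundle) in any adapted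
orthonormal frame consisting of an orthonormal tangent basis `v` at `x` and a smooth
orthonormal normal frame `Nf` along `Σ`, equals `det (D²_Σ u(x) - ⟨II(x), y⟩)`. -/
theorem jacobian_det_phi
    (n m : ℕ)
    (S bS : Set (Euc (n + m)))
    (hS : IsCompactSmoothSubmanifoldWithBoundary n (n + m) S bS)
    -- the second fundamental form `II` of `Σ`, normal-bundle valued, characterized by
    -- `⟪II(v,w), Z⟫ = -⟪D̄_v Z, w⟫` for every smooth ambient normal field `Z`
    (II : Euc (n + m) → Euc (n + m) →ₗ[ℝ] Euc (n + m) →ₗ[ℝ] Euc (n + m))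
    (hII_normal : ∀ x ∈ S, ∀ v w, II x v w ∈ (tangentSpace S x)ᗮ)
    (hII_symm : ∀ x ∈ S, ∀ v w, II x v w = II x w v)
    (hII_tan : ∀ x ∈ S, ∀ v w, II x v w = II x (tproj S x v) (tproj S x w))
    (hII_def : ∀ Z : Euc (n + m) → Euc (n + m), ContDiff ℝ (⊤ : ℕ∞) Z →
      (∀ p ∈ S, Z p ∈ (tangentSpace S p)ᗮ) →
      ∀ x ∈ S, ∀ v ∈ tangentSpace S x, ∀ w ∈ tangentSpace S x,
        ⟪II x v w, Z x⟫_ℝ = -⟪(fderiv ℝ Z x) v, w⟫_ℝ)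
    -- a `C²` function `u` on `Σ` and its tangential gradient `∇^Σ u`
    (u : Euc (n + m) → ℝ) (hu : ContDiffOn ℝ 2 u S)
    (gradu : Euc (n + m) → Euc (n + m))
    (hgradu : ∀ x ∈ S, gradu x ∈ tangentSpace S x ∧
      ∀ v ∈ tangentSpace S x, ⟪gradu x, v⟫_ℝ = fderivWithin ℝ u S x v)
    -- the Hessian `D²_Σ u` of `u` on `Σ`, as a bilinear form on each tangent space
    (Hess : Euc (n + m) → Euc (n + m) →ₗ[ℝ] Euc (n + m) →ₗ[ℝ] ℝ)
    (hHess_def : ∀ x ∈ S, ∀ v ∈ tangentSpace S x, ∀ w ∈ tangentSpace S x,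
      Hess x v w = ⟪fderivWithin ℝ gradu S x v, w⟫_ℝ)
    (hHess_tan : ∀ x ∈ S, ∀ v w, Hess x v w = Hess x (tproj S x v) (tproj S x w)) :
    ∀ x ∈ S \ bS, ∀ y ∈ (tangentSpace S x)ᗮ,
    ∀ v : Fin n → Euc (n + m), Orthonormal ℝ v → (∀ k, v k ∈ tangentSpace S x) →
    ∀ Nf : Fin m → Euc (n + m) → Euc (n + m),
      (∀ a, ContDiff ℝ (⊤ : ℕ∞) (Nf a)) →
      (∀ p ∈ S, Orthonormal ℝ (fun a => Nf a p) ∧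
        ∀ a, Nf a p ∈ (tangentSpace S p)ᗮ) →
      -- the matrix of `DΦ(x,y)` in the adapted orthonormal frame
      Matrix.det (Matrix.of fun r c : Fin n ⊕ Fin m =>
        ⟪Sum.elim v (fun a => Nf a x) r,
          Sum.elim
            (fun j => fderivWithin ℝ
              (fun p => gradu p + ∑ a, ⟪y, Nf a x⟫_ℝ • Nf a p) S x (v j))
            (fun a => Nf a x) c⟫_ℝ)
        = Matrix.det (Matrix.of fun k l =>
            Hess x (v k) (v l) - ⟪II x (v k) (v l), y⟫_ℝ) :=
  jacobian_det_phi_general n m S bS hS II hII_def u hu gradu hgradu Hess hHess_def
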